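/- arXiv:1604.08195 — 2 statements merged into one kernel-verified Lean document; each statement's English description precedes it below -/
import Mathlib

section
/- For complex numbers x, y with |x| < 1 and y ≠ 0, the Jacobi triple product identity holds: ∑_{n ∈ ℤ} x^(n²/2) y^n = ∏_{n=1}^∞ (1 - x^n)(1 + x^n y)(1 + x^n / y). (Equivalently, with x = w², ∑_{n∈ℤ} w^(n²) y^n = ∏_{n≥1} (1 - w^(2n))(1 + w^(2n-1) y)(1 + w^(2n-1)/y).) -/
/-!
The finite form of the identity,
`∏_{j<m} (1 + q^(2j+1) z)(1 + q^(2j+1) / z) = ∑_{|n| ≤ m} [2m, m+n]_{q²} q^(n²) zⁿ`,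
is the `q`-binomial theorem `∏_{k<N} (1 + tᵏ u) = ∑_j t^(j choose 2) [N, j]_t uʲ`
at `t = q²`, `u = q^(1-2m) z`, `N = 2m`, after pairing the factor `k = m - 1 - j` with the
factor `k = m + j`. As `m → ∞`,
`[2m, m+n]_t = (t;t)_{2m} / ((t;t)_{m+n} (t;t)_{m-n}) → 1 / (t;t)_∞`, and all these
coefficients are bounded by `1 / (|t|;|t|)_∞`, so Tannery's theorem lets the finite identity
pass to the limit term by term.
-/

open Finset Filter Topology

namespace JacobiTripleProduct

theorem choose_two_succ (j : ℕ) : (j + 1).choose 2 = j.choose 2 + j := by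
  rw [Nat.choose_succ_succ, Nat.choose_one_right, add_comm]

theorem choose_two_mul_two_add_self (j : ℕ) : j.choose 2 * 2 + j = j ^ 2 := by
  induction j with
  | zero => rfl
  | succ j ih => rw [choose_two_succ]; linear_combination ih

section Semiring

variable {R : Type*} [Semiring R]

/-- The Gaussian binomial coefficient `[N, k]_t`. -/
def gaussBinom (t : R) : ℕ → ℕ → R
  | _, 0 => 1
  | 0, _ + 1 => 0
  | N + 1, k + 1 => gaussBinom t N (k + 1) + t ^ (N - k) * gaussBinom t N k

variable (t : R)

theorem gaussBinom_succ_succ (N k : ℕ) :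
    gaussBinom t (N + 1) (k + 1) = gaussBinom t N (k + 1) + t ^ (N - k) * gaussBinom t N k :=
  rfl

theorem gaussBinom_of_lt : ∀ {N k : ℕ}, N < k → gaussBinom t N k = 0
  | 0, _ + 1, _ => rfl
  | N + 1, k + 1, h => by
    rw [gaussBinom_succ_succ, gaussBinom_of_lt (by omega), gaussBinom_of_lt (by omega), mul_zero,
      add_zero]

theorem gaussBinom_self : ∀ N : ℕ, gaussBinom t N N = 1
  | 0 => rfl
  | N + 1 => by
    rw [gaussBinom_succ_succ, gaussBinom_of_lt t (Nat.lt_succ_self N), gaussBinom_self N,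
      Nat.sub_self, pow_zero, zero_add, one_mul]

end Semiring

theorem prod_range_one_add_pow_mul {R : Type*} [CommSemiring R] (t u : R) (N : ℕ) :
    ∏ k ∈ range N, (1 + t ^ k * u) =
      ∑ j ∈ range (N + 1), t ^ j.choose 2 * gaussBinom t N j * u ^ j := by
  induction N with
  | zero => simp [gaussBinom]
  | succ N ih =>
    set a : ℕ → R := fun j ↦ t ^ j.choose 2 * gaussBinom t N j * u ^ j
    have h_shift : ∑ j ∈ range (N + 1), a (j + 1) + 1 = ∑ j ∈ range (N + 1), a j := by
      have : a 0 = 1 := by simp [a, gaussBinom]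
      rw [← this, ← sum_range_succ', sum_range_succ]
      simp [a, gaussBinom_of_lt t (Nat.lt_succ_self N)]
    have h_carry : ∀ j ∈ range (N + 1),
        t ^ (j + 1).choose 2 * (t ^ (N - j) * gaussBinom t N j) * u ^ (j + 1) =
          t ^ N * u * a j := by
      intro j hj
      have : (j + 1).choose 2 + (N - j) = N + j.choose 2 := by
        rw [choose_two_succ]; have := mem_range.1 hj; omega
      simp only [a]
      rw [← mul_assoc, ← pow_add, this, pow_add, pow_succ]
      ring
    rw [prod_range_succ, ih, sum_range_succ' _ (N + 1)]
    simp only [gaussBinom_succ_succ, mul_add, add_mul, sum_add_distrib]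
    rw [sum_congr rfl h_carry, ← mul_sum]
    simp only [gaussBinom, Nat.choose_zero_succ, pow_zero, mul_one]
    rw [← h_shift]
    ring

section CommRing

variable {R : Type*} [CommRing R] (t : R)

/-- The `q`-Pochhammer symbol `(t; t)ₖ`. -/
def qPochhammer (k : ℕ) : R := ∏ i ∈ range k, (1 - t ^ (i + 1))

theorem qPochhammer_succ (k : ℕ) :
    qPochhammer t (k + 1) = qPochhammer t k * (1 - t ^ (k + 1)) :=
  prod_range_succ _ _

theorem gaussBinom_mul_qPochhammer :
    ∀ {N k : ℕ}, k ≤ N →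
      gaussBinom t N k * (qPochhammer t k * qPochhammer t (N - k)) = qPochhammer t N
  | N, 0, _ => by simp [gaussBinom, qPochhammer]
  | N + 1, k + 1, h => by
    obtain rfl | hk := eq_or_lt_of_le (Nat.le_of_succ_le_succ h)
    · simp [gaussBinom_self, qPochhammer]
    obtain ⟨d, rfl⟩ : ∃ d, N = k + 1 + d := ⟨N - (k + 1), by omega⟩
    have h₁ := gaussBinom_mul_qPochhammer (N := k + 1 + d) (k := k + 1) (by omega)
    have h₂ := gaussBinom_mul_qPochhammer (N := k + 1 + d) (k := k) (by omega)
    rw [show k + 1 + d - (k + 1) = d by omega, qPochhammer_succ _ k] at h₁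
    rw [show k + 1 + d - k = d + 1 by omega, qPochhammer_succ _ d] at h₂
    rw [show k + 1 + d + 1 - (k + 1) = d + 1 by omega, gaussBinom_succ_succ,
      show k + 1 + d - k = d + 1 by omega, qPochhammer_succ _ (k + 1 + d), qPochhammer_succ _ d,
      qPochhammer_succ _ k, show k + 1 + d + 1 = (d + 1) + (k + 1) by omega, pow_add]
    linear_combination (1 - t ^ (d + 1)) * h₁ + t ^ (d + 1) * (1 - t ^ (k + 1)) * h₂

end CommRing

theorem gaussBinom_eq_div {K : Type*} [Field K] {t : K} (ht : ∀ j, qPochhammer t j ≠ 0)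
    {N k : ℕ} (hk : k ≤ N) :
    gaussBinom t N k = qPochhammer t N / (qPochhammer t k * qPochhammer t (N - k)) :=
  eq_div_of_mul_eq (mul_ne_zero (ht k) (ht _)) (gaussBinom_mul_qPochhammer t hk)

section FiniteProduct

variable {K : Type*} [Field K] {q z : K}

def jacobiFactor (q z : K) (j : ℕ) : K :=
  (1 + q ^ (2 * j + 1) * z) * (1 + q ^ (2 * j + 1) * z⁻¹)

theorem prod_range_pow_two_mul_add_one {M : Type*} [CommMonoid M] (q : M) (m : ℕ) :
    ∏ j ∈ range m, q ^ (2 * j + 1) = q ^ (m ^ 2) := by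
  induction m with
  | zero => simp
  | succ m ih => rw [prod_range_succ, ih, ← pow_add]; ring_nf

theorem pow_two_pow_mul_zpow (hq : q ≠ 0) (k : ℕ) (e : ℤ) :
    (q ^ 2) ^ k * q ^ e = q ^ (2 * k + e) := by
  rw [← pow_mul, ← zpow_natCast, ← zpow_add₀ hq]; push_cast; ring_nf

theorem prod_range_one_add_mul_shift (hq : q ≠ 0) (hz : z ≠ 0) (m : ℕ) :
    ∏ k ∈ range (2 * m), (1 + (q ^ 2) ^ k * (q ^ (1 - 2 * m : ℤ) * z)) =
      q ^ (-(m : ℤ) ^ 2) * z ^ (m : ℤ) * ∏ j ∈ range m, jacobiFactor q z j := by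
  have h_low : ∀ j ∈ range m, 1 + (q ^ 2) ^ (m - 1 - j) * (q ^ (1 - 2 * m : ℤ) * z) =
      (q ^ (2 * j + 1))⁻¹ * z * (1 + q ^ (2 * j + 1) * z⁻¹) := by
    intro j hj
    have hjm := mem_range.1 hj
    rw [← mul_assoc, pow_two_pow_mul_zpow hq,
      show (2 * ((m - 1 - j : ℕ) : ℤ) + (1 - 2 * m)) = -((2 * j + 1 : ℕ) : ℤ) by omega,
      zpow_neg, zpow_natCast]
    field_simp
    ring
  have h_high : ∀ j ∈ range m, 1 + (q ^ 2) ^ (m + j) * (q ^ (1 - 2 * m : ℤ) * z) =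
      1 + q ^ (2 * j + 1) * z := by
    intro j _
    rw [← mul_assoc, pow_two_pow_mul_zpow hq, ← zpow_natCast]
    congr 3
    push_cast; ring
  rw [two_mul, prod_range_add, ← prod_range_reflect, prod_congr rfl h_low, prod_congr rfl h_high,
    prod_mul_distrib, prod_mul_distrib, prod_inv_distrib, prod_range_pow_two_mul_add_one,
    prod_const, card_range, show -(m : ℤ) ^ 2 = -((m ^ 2 : ℕ) : ℤ) by push_cast; ring, zpow_neg,
    zpow_natCast, zpow_natCast]
  simp only [jacobiFactor, prod_mul_distrib]
  ring

theorem pow_choose_two_mul_zpow (hq : q ≠ 0) (hz : z ≠ 0) (m j : ℕ) :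
    (q ^ 2) ^ j.choose 2 * (q ^ (1 - 2 * m : ℤ) * z) ^ j =
      q ^ (-(m : ℤ) ^ 2) * z ^ (m : ℤ) * (q ^ (((j : ℤ) - m) ^ 2) * z ^ ((j : ℤ) - m)) := by
  have h_exp : ((j.choose 2 * 2 : ℕ) : ℤ) + (1 - 2 * m) * j = -m ^ 2 + (j - m) ^ 2 := by
    have h := congrArg (Nat.cast : ℕ → ℤ) (choose_two_mul_two_add_self j)
    push_cast at h ⊢
    linear_combination h
  -- both sides are `q ^ (j ^ 2 - 2 * m * j) * z ^ j`
  rw [mul_pow, ← mul_assoc, ← pow_mul, ← zpow_natCast, ← zpow_natCast (q ^ _), ← zpow_mul,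
    ← zpow_add₀ hq, mul_comm 2, ← zpow_natCast z, mul_mul_mul_comm, ← zpow_add₀ hq,
    ← zpow_add₀ hz, add_sub_cancel, h_exp]

theorem prod_range_jacobiFactor (hq : q ≠ 0) (hz : z ≠ 0) (m : ℕ) :
    ∏ j ∈ range m, jacobiFactor q z j =
      ∑ n ∈ Icc (-(m : ℤ)) m, gaussBinom (q ^ 2) (2 * m) (m + n).toNat * (q ^ (n ^ 2) * z ^ n) := by
  have key := prod_range_one_add_pow_mul (q ^ 2) (q ^ (1 - 2 * m : ℤ) * z) (2 * m)
  simp_rw [prod_range_one_add_mul_shift hq hz, mul_right_comm _ (gaussBinom _ _ _),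
    pow_choose_two_mul_zpow hq hz, mul_assoc (q ^ (-(m : ℤ) ^ 2) * z ^ (m : ℤ)),
    ← mul_sum] at key
  rw [mul_left_cancel₀ (mul_ne_zero (zpow_ne_zero _ hq) (zpow_ne_zero _ hz)) key]
  refine sum_nbij' (fun j ↦ (j : ℤ) - m) (fun n ↦ (m + n).toNat) ?_ ?_ ?_ ?_ ?_ <;>
    intro a ha <;> simp only [mem_range, mem_Icc] at ha ⊢
  · omega
  · omega
  · omega
  · omega
  · rw [show ((m : ℤ) + (a - m)).toNat = a by omega, mul_comm]

end FiniteProduct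

section NormedField

variable {K : Type*} [NormedField K] {t : K}

theorem summable_norm_pow_succ (ht : ‖t‖ < 1) : Summable fun i : ℕ ↦ ‖t ^ (i + 1)‖ := by
  simpa [norm_pow] using
    (summable_nat_add_iff 1).2 (summable_geometric_of_lt_one (norm_nonneg t) ht)

theorem one_sub_pow_succ_ne_zero (ht : ‖t‖ < 1) (i : ℕ) : 1 - t ^ (i + 1) ≠ 0 := by
  intro h
  have h_norm := congrArg norm (sub_eq_zero.1 h)
  rw [norm_pow, norm_one] at h_norm
  exact (pow_lt_one₀ (norm_nonneg t) ht i.succ_ne_zero).ne h_norm.symm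

theorem qPochhammer_ne_zero (ht : ‖t‖ < 1) (k : ℕ) : qPochhammer t k ≠ 0 :=
  prod_ne_zero_iff.2 fun i _ ↦ one_sub_pow_succ_ne_zero ht i

variable [CompleteSpace K]

theorem multipliable_one_sub_pow_succ (ht : ‖t‖ < 1) :
    Multipliable fun i : ℕ ↦ 1 - t ^ (i + 1) := by
  simpa [sub_eq_add_neg] using multipliable_one_add_of_summable (f := fun i : ℕ ↦ -t ^ (i + 1))
    (by simpa using summable_norm_pow_succ ht)

theorem tprod_one_sub_pow_succ_ne_zero (ht : ‖t‖ < 1) : ∏' i : ℕ, (1 - t ^ (i + 1)) ≠ 0 := by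
  simpa [sub_eq_add_neg] using
    tprod_one_add_ne_zero_of_summable (f := fun i : ℕ ↦ -t ^ (i + 1))
      (by simpa [← sub_eq_add_neg] using one_sub_pow_succ_ne_zero ht)
      (by simpa using summable_norm_pow_succ ht)

theorem tendsto_qPochhammer (ht : ‖t‖ < 1) :
    Tendsto (qPochhammer t) atTop (𝓝 (∏' i : ℕ, (1 - t ^ (i + 1)))) :=
  (multipliable_one_sub_pow_succ ht).hasProd.tendsto_prod_nat

end NormedField

section RealBounds

variable {r : ℝ} (hr₀ : 0 ≤ r) (hr₁ : r < 1)
include hr₀ hr₁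

theorem qPochhammer_pos (k : ℕ) : 0 < qPochhammer r k :=
  prod_pos fun i _ ↦ sub_pos.2 (pow_lt_one₀ hr₀ hr₁ i.succ_ne_zero)

theorem qPochhammer_antitone : Antitone (qPochhammer r) :=
  antitone_nat_of_succ_le fun k ↦ by
    rw [qPochhammer_succ]
    exact mul_le_of_le_one_right (qPochhammer_pos hr₀ hr₁ k).le (sub_le_self _ (by positivity))

theorem tprod_one_sub_pow_succ_le_qPochhammer (k : ℕ) :
    ∏' i : ℕ, (1 - r ^ (i + 1)) ≤ qPochhammer r k :=
  (qPochhammer_antitone hr₀ hr₁).le_of_tendsto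
    (tendsto_qPochhammer (by rwa [Real.norm_of_nonneg hr₀])) k

theorem tprod_one_sub_pow_succ_pos : 0 < ∏' i : ℕ, (1 - r ^ (i + 1)) :=
  (tprod_nonneg fun i ↦ sub_nonneg.2 (pow_le_one₀ hr₀ hr₁.le)).lt_of_ne'
    (tprod_one_sub_pow_succ_ne_zero (by rwa [Real.norm_of_nonneg hr₀]))

theorem gaussBinom_le_inv_tprod (N k : ℕ) :
    gaussBinom r N k ≤ (∏' i : ℕ, (1 - r ^ (i + 1)))⁻¹ := by
  have hP := tprod_one_sub_pow_succ_pos hr₀ hr₁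
  rcases lt_or_ge N k with hNk | hkN
  · rw [gaussBinom_of_lt r hNk]; positivity
  have h_mul := gaussBinom_mul_qPochhammer r hkN
  calc gaussBinom r N k ≤ (qPochhammer r (N - k))⁻¹ := by
        rw [inv_eq_one_div, le_div_iff₀ (qPochhammer_pos hr₀ hr₁ _)]
        refine le_of_mul_le_mul_left ?_ (qPochhammer_pos hr₀ hr₁ k)
        calc qPochhammer r k * (gaussBinom r N k * qPochhammer r (N - k))
            = qPochhammer r N := by rw [← h_mul]; ring
          _ ≤ qPochhammer r k * 1 := by rw [mul_one]; exact qPochhammer_antitone hr₀ hr₁ hkN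
    _ ≤ _ := inv_anti₀ hP (tprod_one_sub_pow_succ_le_qPochhammer hr₀ hr₁ _)

end RealBounds

section NormBounds

variable {R : Type*} [NormedRing R] [NormOneClass R]

theorem norm_gaussBinom_le (t : R) : ∀ N k : ℕ, ‖gaussBinom t N k‖ ≤ gaussBinom ‖t‖ N k
  | _, 0 => by simp [gaussBinom]
  | 0, _ + 1 => by simp [gaussBinom]
  | N + 1, k + 1 => by
    rw [gaussBinom_succ_succ, gaussBinom_succ_succ]
    refine (norm_add_le _ _).trans (add_le_add (norm_gaussBinom_le t N (k + 1)) ?_)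
    exact (norm_mul_le _ _).trans (mul_le_mul (norm_pow_le _ _) (norm_gaussBinom_le t N k)
      (norm_nonneg _) (by positivity))

theorem norm_gaussBinom_le_inv_tprod {t : R} (ht : ‖t‖ < 1) (N k : ℕ) :
    ‖gaussBinom t N k‖ ≤ (∏' i : ℕ, (1 - ‖t‖ ^ (i + 1)))⁻¹ :=
  (norm_gaussBinom_le t N k).trans (gaussBinom_le_inv_tprod (norm_nonneg t) ht N k)

end NormBounds

section Limit

variable {K : Type*} [NormedField K] [CompleteSpace K] {t : K}

theorem tendsto_gaussBinom_two_mul (ht : ‖t‖ < 1) (n : ℤ) :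
    Tendsto (fun m : ℕ ↦ gaussBinom t (2 * m) (m + n).toNat) atTop
      (𝓝 (∏' i : ℕ, (1 - t ^ (i + 1)))⁻¹) := by
  have hP := tprod_one_sub_pow_succ_ne_zero ht
  have h_two : Tendsto (fun m : ℕ ↦ 2 * m) atTop atTop :=
    tendsto_id.const_mul_atTop' two_pos
  have h_lo : Tendsto (fun m : ℕ ↦ ((m : ℤ) + n).toNat) atTop atTop :=
    tendsto_atTop_atTop.2 fun b ↦ ⟨b + n.natAbs, fun m hm ↦ by omega⟩
  have h_hi : Tendsto (fun m : ℕ ↦ 2 * m - ((m : ℤ) + n).toNat) atTop atTop :=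
    tendsto_atTop_atTop.2 fun b ↦ ⟨b + n.natAbs, fun m hm ↦ by omega⟩
  have h_lim := ((tendsto_qPochhammer ht).comp h_two).div
    (((tendsto_qPochhammer ht).comp h_lo).mul ((tendsto_qPochhammer ht).comp h_hi))
    (mul_ne_zero hP hP)
  rw [div_mul_cancel_left₀ hP] at h_lim
  refine h_lim.congr' ?_
  filter_upwards [eventually_ge_atTop n.natAbs] with m hm
  exact (gaussBinom_eq_div (qPochhammer_ne_zero ht) (N := 2 * m) (k := (m + n).toNat)
    (by omega)).symm

theorem tendsto_sum_Icc_gaussBinom_mul (ht : ‖t‖ < 1) {a : ℤ → K} (ha : Summable (‖a ·‖)) :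
    Tendsto (fun m : ℕ ↦ ∑ n ∈ Icc (-(m : ℤ)) m, gaussBinom t (2 * m) (m + n).toNat * a n) atTop
      (𝓝 ((∏' i : ℕ, (1 - t ^ (i + 1)))⁻¹ * ∑' n, a n)) := by
  simp_rw [sum_eq_tsum_indicator (L := SummationFilter.unconditional ℤ), ← tsum_mul_left]
  refine tendsto_tsum_of_dominated_convergence (ha.mul_left (∏' i : ℕ, (1 - ‖t‖ ^ (i + 1)))⁻¹)
    (fun n ↦ ?_) (.of_forall fun m n ↦ ?_)
  · refine ((tendsto_gaussBinom_two_mul ht n).mul_const (a n)).congr' ?_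
    filter_upwards [eventually_ge_atTop n.natAbs] with m hm
    rw [Set.indicator_of_mem (by simp only [coe_Icc, Set.mem_Icc]; omega)]
  · exact (norm_indicator_le_norm_self _ _).trans <| (norm_mul _ _).trans_le <|
      mul_le_mul_of_nonneg_right (norm_gaussBinom_le_inv_tprod ht _ _) (norm_nonneg _)

end Limit

section Theta

variable {K : Type*} [NormedField K] {q z : K}

theorem summable_norm_pow_sq_mul_pow (hq : ‖q‖ < 1) (c : K) :
    Summable fun k : ℕ ↦ ‖q ^ (k ^ 2) * c ^ k‖ := by
  have h_small : ∀ᶠ k : ℕ in atTop, ‖q‖ ^ k * ‖c‖ ≤ 1 / 2 := by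
    have := (tendsto_pow_atTop_nhds_zero_of_lt_one (norm_nonneg q) hq).mul_const ‖c‖
    rw [zero_mul] at this
    exact this.eventually (eventually_le_nhds (by norm_num))
  refine summable_geometric_two.of_norm_bounded_eventually_nat ?_
  filter_upwards [h_small] with k hk
  rw [norm_norm, norm_mul, norm_pow, norm_pow, sq, pow_mul, ← mul_pow]
  exact pow_le_pow_left₀ (by positivity) hk k

theorem summable_norm_zpow_sq_mul_zpow (hq : ‖q‖ < 1) (z : K) :
    Summable fun n : ℤ ↦ ‖q ^ (n ^ 2) * z ^ n‖ := by
  apply Summable.of_nat_of_neg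
  · refine (summable_norm_pow_sq_mul_pow hq z).congr fun k ↦ ?_
    norm_cast
  · refine (summable_norm_pow_sq_mul_pow hq z⁻¹).congr fun k ↦ ?_
    rw [neg_sq, zpow_neg, ← inv_zpow]
    norm_cast

variable [CompleteSpace K]

theorem multipliable_jacobiFactor (hq : ‖q‖ < 1) (z : K) : Multipliable (jacobiFactor q z) := by
  have hq₂ : ‖q‖ ^ 2 < 1 := pow_lt_one₀ (norm_nonneg q) hq two_ne_zero
  have h_odd : ∀ c : K, Multipliable fun j : ℕ ↦ 1 + q ^ (2 * j + 1) * c := fun c ↦ by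
    refine multipliable_one_add_of_summable <|
      ((summable_geometric_of_lt_one (by positivity) hq₂).mul_left (‖q‖ * ‖c‖)).congr fun j ↦ ?_
    rw [norm_mul, norm_pow]
    ring
  exact (h_odd z).mul (h_odd z⁻¹)

theorem tsum_zpow_sq_mul_zpow (hq : ‖q‖ < 1) (hz : z ≠ 0) :
    ∑' n : ℤ, q ^ (n ^ 2) * z ^ n =
      (∏' i : ℕ, (1 - (q ^ 2) ^ (i + 1))) * ∏' j : ℕ, jacobiFactor q z j := by
  rcases eq_or_ne q 0 with rfl | hq₀
  · simp [jacobiFactor, zero_zpow_eq]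
  have hq₂ : ‖q ^ 2‖ < 1 := by rw [norm_pow]; exact pow_lt_one₀ (norm_nonneg q) hq two_ne_zero
  have h := tendsto_sum_Icc_gaussBinom_mul hq₂ (summable_norm_zpow_sq_mul_zpow hq z)
  simp_rw [← prod_range_jacobiFactor hq₀ hz] at h
  rw [tendsto_nhds_unique (multipliable_jacobiFactor hq z).hasProd.tendsto_prod_nat h, ← mul_assoc,
    mul_inv_cancel₀ (tprod_one_sub_pow_succ_ne_zero hq₂), one_mul]

end Theta

end JacobiTripleProduct

open JacobiTripleProduct in
/-- Jacobi triple product identity: with `x = w ^ 2`, `|w| < 1`, `y ≠ 0`,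
`∑_{n ∈ ℤ} w^(n²) y^n = ∏_{n ≥ 1} (1 - w^(2n))(1 + w^(2n-1) y)(1 + w^(2n-1)/y)`. -/
theorem jacobi_triple_product (w y : ℂ) (hw : ‖w‖ < 1) (hy : y ≠ 0) :
    ∑' n : ℤ, w ^ (n ^ 2) * y ^ n =
      ∏' n : ℕ, (1 - w ^ (2 * (n + 1))) * (1 + w ^ (2 * (n + 1) - 1) * y) *
        (1 + w ^ (2 * (n + 1) - 1) / y) := by
  have hw₂ : ‖w ^ 2‖ < 1 := by rw [norm_pow]; exact pow_lt_one₀ (norm_nonneg w) hw two_ne_zero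
  have h_factor : ∀ n : ℕ, (1 - w ^ (2 * (n + 1))) * (1 + w ^ (2 * (n + 1) - 1) * y) *
      (1 + w ^ (2 * (n + 1) - 1) / y) = (1 - (w ^ 2) ^ (n + 1)) * jacobiFactor w y n := fun n ↦ by
    rw [jacobiFactor, div_eq_mul_inv, ← pow_mul, show 2 * (n + 1) - 1 = 2 * n + 1 by omega,
      mul_assoc]
  rw [tprod_congr h_factor,
    (multipliable_one_sub_pow_succ hw₂).tprod_mul (multipliable_jacobiFactor hw y)]
  exact tsum_zpow_sq_mul_zpow hw hy
end

section
/- For every positive integer N: if the 2-adic valuation v₂(N) of N is even, then ∑_{d | N, d odd} χ₃(d) = ∑_{d | N} χ₃(d) and ∑_{d | N, N/d odd} χ₃(d) = ∑_{d | N} χ₃(d); if v₂(N) is odd, then ∑_{d | N, d odd} χ₃(d) = ∑_{d | N/2} χ₃(d) and ∑_{d | N, N/d odd} χ₃(d) = -∑_{d | N/2} χ₃(d). -/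
/-!
Write `N = 2 ^ a * m` with `m` odd. Since `χ₃` is completely multiplicative with `χ₃(2) = -1`,
the divisor sum of `χ₃` over `2 ^ a` is `1` or `0` according as `a` is even or odd, so by
multiplicativity `∑_{d ∣ N} χ₃(d)` is `∑_{d ∣ m} χ₃(d)` or `0`. The odd divisors of `N` are the
divisors of `m`, and `d ↦ N / d` maps the divisors with odd cofactor onto them, contributing a
factor `χ₃(2 ^ a) = (-1) ^ a`. For odd `a`, `N / 2 = 2 ^ (a - 1) * m` with `a - 1` even.
-/

/-- The Legendre symbol mod 3. -/
def chiThree (d : ℕ) : ℤ := if d % 3 = 1 then 1 else if d % 3 = 2 then -1 else 0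

open Finset ArithmeticFunction

lemma chiThree_mul (a b : ℕ) : chiThree (a * b) = chiThree a * chiThree b := by
  unfold chiThree
  rw [Nat.mul_mod]
  have ha : a % 3 < 3 := Nat.mod_lt _ (by norm_num)
  have hb : b % 3 < 3 := Nat.mod_lt _ (by norm_num)
  interval_cases a % 3 <;> interval_cases b % 3 <;> decide

lemma chiThree_two_pow (a : ℕ) : chiThree (2 ^ a) = (-1) ^ a := by
  induction a with
  | zero => decide
  | succ n ih => rw [pow_succ, chiThree_mul, ih, pow_succ]; rfl

noncomputable def chiThreeArith : ArithmeticFunction ℤ := ⟨chiThree, by decide⟩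

lemma isMultiplicative_chiThreeArith : chiThreeArith.IsMultiplicative :=
  ⟨by decide, fun {m n} _ => chiThree_mul m n⟩

lemma sum_chiThree_divisors_mul {m n : ℕ} (h : m.Coprime n) :
    ∑ d ∈ (m * n).divisors, chiThree d =
      (∑ d ∈ m.divisors, chiThree d) * ∑ d ∈ n.divisors, chiThree d := by
  have hmul :=
    (isMultiplicative_zeta.natCast.mul isMultiplicative_chiThreeArith).map_mul_of_coprime h
  simp only [coe_zeta_mul_apply] at hmul
  exact hmul

lemma sum_chiThree_divisors_two_pow (a : ℕ) :
    ∑ d ∈ (2 ^ a).divisors, chiThree d = if Even a then 1 else 0 := by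
  simp_rw [Nat.sum_divisors_prime_pow Nat.prime_two, chiThree_two_pow, neg_one_geom_sum,
    Nat.even_add_one, ite_not]

lemma padicValNat_two_pow_mul_of_odd (a : ℕ) {m : ℕ} (hm : Odd m) :
    padicValNat 2 (2 ^ a * m) = a := by
  rw [padicValNat.mul (pow_ne_zero a two_ne_zero) hm.pos.ne', padicValNat.prime_pow,
    padicValNat.eq_zero_of_not_dvd hm.not_two_dvd_nat, add_zero]

lemma Nat.divisors_two_pow_mul_filter_odd (a : ℕ) {m : ℕ} (hm : Odd m) :
    (2 ^ a * m).divisors.filter Odd = m.divisors := by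
  ext d
  simp only [mem_filter, Nat.mem_divisors, ne_eq, mul_eq_zero, pow_eq_zero_iff',
    OfNat.ofNat_ne_zero, false_and, false_or]
  constructor
  · rintro ⟨⟨hd, hm0⟩, hdodd⟩
    exact ⟨((Nat.coprime_two_right.mpr hdodd).pow_right a).dvd_of_dvd_mul_left hd, hm0⟩
  · rintro ⟨hd, hm0⟩
    exact ⟨⟨hd.mul_left _, hm0⟩, hm.of_dvd_nat hd⟩

lemma Nat.sum_divisors_filter_div {M : Type*} [AddCommMonoid M] (N : ℕ) (P : ℕ → Prop)
    [DecidablePred P] (f : ℕ → M) :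
    ∑ d ∈ N.divisors.filter (fun d => P (N / d)), f d = ∑ d ∈ N.divisors.filter P, f (N / d) := by
  rw [sum_filter, sum_filter, ← Nat.sum_div_divisors]
  refine sum_congr rfl fun d hd => ?_
  rw [Nat.div_div_self (Nat.dvd_of_mem_divisors hd) ((Nat.mem_divisors.mp hd).2)]

lemma sum_chiThree_divisors_two_pow_mul (a : ℕ) {m : ℕ} (hm : Odd m) :
    ∑ d ∈ (2 ^ a * m).divisors, chiThree d =
      (if Even a then 1 else 0) * ∑ d ∈ m.divisors, chiThree d := by
  rw [sum_chiThree_divisors_mul ((Nat.coprime_two_left.mpr hm).pow_left a),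
    sum_chiThree_divisors_two_pow]

lemma sum_chiThree_divisors_two_pow_mul_filter_odd_div (a : ℕ) {m : ℕ} (hm : Odd m) :
    ∑ d ∈ (2 ^ a * m).divisors.filter (fun d => Odd ((2 ^ a * m) / d)), chiThree d =
      (-1) ^ a * ∑ d ∈ m.divisors, chiThree d := by
  rw [Nat.sum_divisors_filter_div, Nat.divisors_two_pow_mul_filter_odd a hm, mul_sum,
    ← Nat.sum_div_divisors m (fun d => (-1) ^ a * chiThree d)]
  refine sum_congr rfl fun d hd => ?_
  rw [Nat.mul_div_assoc _ (Nat.dvd_of_mem_divisors hd), chiThree_mul, chiThree_two_pow]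

/-- Behaviour of restricted divisor sums of `χ₃` according to the parity of `v₂(N)`. -/
theorem chiThree_restricted_divisor_sums (N : ℕ) (hN : 0 < N) :
    (Even (padicValNat 2 N) →
      (∑ d ∈ N.divisors.filter (fun d => Odd d), chiThree d =
          ∑ d ∈ N.divisors, chiThree d) ∧
        ∑ d ∈ N.divisors.filter (fun d => Odd (N / d)), chiThree d =
          ∑ d ∈ N.divisors, chiThree d) ∧
    (Odd (padicValNat 2 N) →
      (∑ d ∈ N.divisors.filter (fun d => Odd d), chiThree d =
          ∑ d ∈ (N / 2).divisors, chiThree d) ∧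
        ∑ d ∈ N.divisors.filter (fun d => Odd (N / d)), chiThree d =
          -∑ d ∈ (N / 2).divisors, chiThree d) := by
  obtain ⟨a, m, hm, rfl⟩ := Nat.exists_eq_two_pow_mul_odd hN.ne'
  rw [padicValNat_two_pow_mul_of_odd a hm, Nat.divisors_two_pow_mul_filter_odd a hm,
    sum_chiThree_divisors_two_pow_mul_filter_odd_div a hm, sum_chiThree_divisors_two_pow_mul a hm]
  refine ⟨fun ha => by rw [if_pos ha, one_mul, ha.neg_one_pow, one_mul]; exact ⟨rfl, rfl⟩, ?_⟩
  rintro ⟨k, rfl⟩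
  have hhalf : 2 ^ (2 * k + 1) * m / 2 = 2 ^ (2 * k) * m := by
    rw [pow_succ, mul_right_comm, Nat.mul_div_cancel _ two_pos]
  rw [hhalf, sum_chiThree_divisors_two_pow_mul _ hm, if_pos (even_two_mul k),
    Odd.neg_one_pow ⟨k, rfl⟩, one_mul, neg_one_mul]
  exact ⟨rfl, rfl⟩
end
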